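/- Let m ≥ 2, g ≥ 1 and n ≥ g·m be integers. Call a cell configuration a family of m pairwise disjoint nonempty subsets B_1, …, B_m of ZMod n, each of the form {a} or {a, a+1}, such that for any two distinct blocks B_i, B_j the minimum cyclic distance between an element of B_i and an element of B_j is at least g. Then the maximum, over all cell configurations, of the number of two-element blocks equals min(m, n − g·m). (This expresses that the dimension of the cubical complex Φ_{m,n,g} is min(m, n − gm).) -/
import Mathlib


open Classical

/-- The cyclic distance between two elements of `ZMod n`:
`dist(a,b) = min((a−b).val, (b−a).val)`. -/
def cycDist {n : ℕ} (a b : ZMod n) : ℕ := min (a - b).val (b - a).val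

lemma cycDist_comm' {n : ℕ} (a b : ZMod n) : cycDist a b = cycDist b a := min_comm _ _

lemma cycDist_self' {n : ℕ} (a : ZMod n) : cycDist a a = 0 := by simp [cycDist]

lemma cycDist_ge {n g u x : ℕ} (hg : 1 ≤ g) (hgu : g ≤ u) (hun : u + g ≤ n) :
    g ≤ cycDist ((x + u : ℕ) : ZMod n) (x : ZMod n) := by
  have hu : u < n := by omega
  have h1 : ((x + u : ℕ) : ZMod n) - (x : ℕ) = ((u : ℕ) : ZMod n) := by push_cast; ring
  have h2 : ((x : ℕ) : ZMod n) - ((x + u : ℕ) : ZMod n) = ((n - u : ℕ) : ZMod n) := by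
    push_cast [Nat.cast_sub hu.le]
    simp [ZMod.natCast_self]
  unfold cycDist
  rw [h1, h2, ZMod.val_natCast_of_lt hu, ZMod.val_natCast_of_lt (by omega)]
  omega

lemma construction (m n g : ℕ) (hm : 2 ≤ m) (hg : 1 ≤ g) (hn : g * m ≤ n) :
    ∃ B : Fin m → Finset (ZMod n),
      ((∀ i, (B i).Nonempty) ∧
      (∀ i j, i ≠ j → Disjoint (B i) (B j)) ∧
      (∀ i, (∃ a : ZMod n, B i = {a}) ∨ (∃ a : ZMod n, B i = {a, a + 1})) ∧
      (∀ i j, i ≠ j → ∀ a ∈ B i, ∀ b ∈ B j, g ≤ cycDist a b)) ∧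
      (Finset.univ.filter (fun i => (B i).card = 2)).card = min m (n - g * m) := by
  have hn2 : 2 ≤ n := by
    have : 2 ≤ g * m := le_trans hm (Nat.le_mul_of_pos_left m hg)
    omega
  haveI : Fact (1 < n) := ⟨by omega⟩
  set k := min m (n - g * m) with hkdef
  have hkm : k ≤ m := min_le_left _ _
  have hkn : m * g + k ≤ n := by
    have h := min_le_right m (n - g * m)
    have : g * m = m * g := Nat.mul_comm _ _
    omega
  set p : ℕ → ℕ := fun i => i * g + min i k with hp
  set B : Fin m → Finset (ZMod n) := fun i =>
    if (i : ℕ) < k then {((p (i:ℕ) : ℕ) : ZMod n), ((p (i:ℕ) : ℕ) : ZMod n) + 1}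
    else {((p (i:ℕ) : ℕ) : ZMod n)} with hB
  -- membership characterization
  have hmem : ∀ (i : Fin m) (x : ZMod n), x ∈ B i →
      ∃ ε : ℕ, (ε = 0 ∨ (ε = 1 ∧ (i : ℕ) < k)) ∧ x = ((p (i:ℕ) + ε : ℕ) : ZMod n) := by
    intro i x hx
    simp only [hB] at hx
    by_cases h : (i : ℕ) < k
    · rw [if_pos h, Finset.mem_insert, Finset.mem_singleton] at hx
      rcases hx with h1 | h1
      · exact ⟨0, Or.inl rfl, by simpa using h1⟩
      · exact ⟨1, Or.inr ⟨rfl, h⟩, by rw [h1]; push_cast; ring⟩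
    · rw [if_neg h, Finset.mem_singleton] at hx
      exact ⟨0, Or.inl rfl, by simpa using hx⟩
  -- the key distance claim for i < j
  have key : ∀ i j : Fin m, (i : ℕ) < (j : ℕ) → ∀ x ∈ B i, ∀ y ∈ B j,
      g ≤ cycDist y x := by
    intro i j hij x hx y hy
    obtain ⟨ε, hε, rfl⟩ := hmem i x hx
    obtain ⟨δ, hδ, rfl⟩ := hmem j y hy
    have h1 : (i:ℕ) * g + g ≤ (j:ℕ) * g := by
      have h := Nat.mul_le_mul_right g hij
      rwa [Nat.succ_mul] at h
    have h2 : (j:ℕ) * g + g ≤ m * g := by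
      have h := Nat.mul_le_mul_right g j.isLt
      rwa [Nat.succ_mul] at h
    have hle : p (i:ℕ) + ε + g ≤ p (j:ℕ) + δ := by
      simp only [hp]
      rcases hε with rfl | ⟨rfl, hik⟩ <;> omega
    have hyn : p (j:ℕ) + δ + g ≤ n := by
      simp only [hp]
      rcases hδ with rfl | ⟨rfl, hjk⟩ <;> omega
    have hrw : p (j:ℕ) + δ = (p (i:ℕ) + ε) + (p (j:ℕ) + δ - (p (i:ℕ) + ε)) := by omega
    rw [hrw]
    exact cycDist_ge hg (by omega) (by omega)
  have hdist : ∀ i j : Fin m, i ≠ j → ∀ a ∈ B i, ∀ b ∈ B j, g ≤ cycDist a b := by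
    intro i j hij a ha b hb
    rcases lt_or_gt_of_ne (fun h : (i:ℕ) = (j:ℕ) => hij (Fin.ext h)) with h | h
    · rw [cycDist_comm']; exact key i j h a ha b hb
    · exact key j i h b hb a ha
  have hdisj : ∀ i j : Fin m, i ≠ j → Disjoint (B i) (B j) := by
    intro i j hij
    rw [Finset.disjoint_left]
    intro x hx hx'
    have := hdist i j hij x hx x hx'
    rw [cycDist_self'] at this
    omega
  refine ⟨B, ⟨?_, hdisj, ?_, hdist⟩, ?_⟩
  · intro i
    simp only [hB]
    by_cases h : (i : ℕ) < k <;> simp [h]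
  · intro i
    simp only [hB]
    by_cases h : (i : ℕ) < k
    · exact Or.inr ⟨_, by rw [if_pos h]⟩
    · exact Or.inl ⟨_, by rw [if_neg h]⟩
  · have hcard2 : ∀ i : Fin m, (B i).card = 2 ↔ (i : ℕ) < k := by
      intro i
      simp only [hB]
      by_cases h : (i : ℕ) < k
      · rw [if_pos h]
        simp only [h, iff_true]
        refine Finset.card_pair ?_
        intro hc
        have : (1 : ZMod n) = 0 := by
          have h2 := congrArg (· - ((p (i:ℕ) : ℕ) : ZMod n)) hc
          simpa using h2.symm
        exact one_ne_zero this
      · rw [if_neg h]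
        simp [h]
    have hfe : (Finset.univ.filter fun i : Fin m => (B i).card = 2)
        = (Finset.range k).attachFin
          (fun x hx => lt_of_lt_of_le (Finset.mem_range.mp hx) hkm) := by
      ext i
      simp [Finset.mem_attachFin, hcard2]
    rw [hfe, Finset.card_attachFin, Finset.card_range]

lemma cycDist_add_le {n r : ℕ} (hr : r < n) (b : ZMod n) :
    cycDist (b + (r : ZMod n)) b ≤ r := by
  have h : (b + (r : ZMod n)) - b = ((r : ℕ) : ZMod n) := by ring
  calc cycDist (b + (r : ZMod n)) b ≤ ((b + (r : ZMod n)) - b).val := min_le_left _ _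
    _ = r := by rw [h, ZMod.val_natCast_of_lt hr]

lemma upper (m n g : ℕ) (hm : 2 ≤ m) (hg : 1 ≤ g) (hn : g * m ≤ n)
    (B : Fin m → Finset (ZMod n))
    (hne : ∀ i, (B i).Nonempty)
    (hstruct : ∀ i, (∃ a : ZMod n, B i = {a}) ∨ (∃ a : ZMod n, B i = {a, a + 1}))
    (hdist : ∀ i j, i ≠ j → ∀ a ∈ B i, ∀ b ∈ B j, g ≤ cycDist a b) :
    (Finset.univ.filter (fun i => (B i).card = 2)).card ≤ min m (n - g * m) := by
  have hn2 : 2 ≤ n := by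
    have : 2 ≤ g * m := le_trans hm (Nat.le_mul_of_pos_left m hg)
    omega
  have hgn : g + 1 ≤ n := by
    have h2 : 2 * g ≤ m * g := Nat.mul_le_mul_right g hm
    have h3 : g * m = m * g := Nat.mul_comm _ _
    omega
  haveI : Fact (1 < n) := ⟨by omega⟩
  set d := (Finset.univ.filter (fun i => (B i).card = 2)).card with hd
  have hdm : d ≤ m := by
    rw [hd]
    calc _ ≤ Finset.univ.card := Finset.card_filter_le _ _
      _ = m := by simp
  refine le_min hdm ?_
  -- choose leftmost elements and sizes
  have hex : ∀ i, ∃ (a : ZMod n) (s : ℕ), 1 ≤ s ∧ s ≤ 2 ∧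
      B i = (Finset.range s).image (fun t : ℕ => a + (t : ZMod n)) ∧ (B i).card = s := by
    intro i
    rcases hstruct i with ⟨a, ha⟩ | ⟨a, ha⟩
    · refine ⟨a, 1, le_refl _, by omega, ?_, by rw [ha]; simp⟩
      rw [ha]; ext x; simp
    · have hne1 : a ≠ a + 1 := by
        intro hc
        have h2 : (1 : ZMod n) = 0 := by
          have h3 := congrArg (· - a) hc
          simpa using h3.symm
        exact one_ne_zero h2
      refine ⟨a, 2, by omega, le_refl _, ?_, by rw [ha]; exact Finset.card_pair hne1⟩
      rw [ha, show Finset.range 2 = {0, 1} from rfl]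
      simp [Finset.image_insert]
  choose a s hs1 hs2 hBi hcardB using hex
  -- the fattened intervals
  set T : Fin m → Finset (ZMod n) :=
    fun i => (Finset.range (s i + g - 1)).image (fun t : ℕ => a i + (t : ZMod n)) with hT
  have hcast_inj : ∀ i : Fin m, ∀ t ∈ Finset.range (s i + g - 1),
      ∀ t' ∈ Finset.range (s i + g - 1),
      a i + (t : ZMod n) = a i + (t' : ZMod n) → t = t' := by
    intro i t ht t' ht' h
    rw [Finset.mem_range] at ht ht'
    have h2 : ((t : ℕ) : ZMod n) = ((t' : ℕ) : ZMod n) := by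
      exact add_left_cancel h
    have hb : s i + g - 1 ≤ n := by have := hs2 i; omega
    have := congrArg ZMod.val h2
    rwa [ZMod.val_natCast_of_lt (by omega), ZMod.val_natCast_of_lt (by omega)] at this
  have hcardT : ∀ i, (T i).card = s i + g - 1 := by
    intro i
    rw [hT]
    rw [Finset.card_image_of_injOn (fun t ht t' ht' h => hcast_inj i t ht t' ht' h),
      Finset.card_range]
  -- decomposition of elements of T i
  have hdecomp : ∀ i : Fin m, ∀ x ∈ T i, ∃ (e : ZMod n) (r : ℕ),
      e ∈ B i ∧ r ≤ g - 1 ∧ x = e + (r : ZMod n) := by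
    intro i x hx
    rw [hT, Finset.mem_image] at hx
    obtain ⟨t, ht, rfl⟩ := hx
    rw [Finset.mem_range] at ht
    have hsi := hs1 i
    refine ⟨a i + ((min t (s i - 1) : ℕ) : ZMod n), t - min t (s i - 1), ?_, by omega, ?_⟩
    · rw [hBi i, Finset.mem_image]
      exact ⟨min t (s i - 1), Finset.mem_range.mpr (by omega), rfl⟩
    · have : ((t : ℕ) : ZMod n) = ((min t (s i - 1) : ℕ) : ZMod n)
          + ((t - min t (s i - 1) : ℕ) : ZMod n) := by
        rw [← Nat.cast_add]
        congr 1
        omega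
      rw [this, add_assoc]
  -- pairwise disjointness of T
  have hdisjT : ∀ i ∈ (Finset.univ : Finset (Fin m)), ∀ j ∈ Finset.univ, i ≠ j →
      Disjoint (T i) (T j) := by
    intro i _ j _ hij
    rw [Finset.disjoint_left]
    intro x hxi hxj
    obtain ⟨e, r, he, hr, rfl⟩ := hdecomp i x hxi
    obtain ⟨f, r', hf, hr', hx⟩ := hdecomp j _ hxj
    -- e + r = f + r'
    rcases le_total r r' with hle | hle
    · -- e = f + (r' - r)
      have hef : e = f + (((r' - r : ℕ) : ZMod n)) := by
        have : (e + (r : ZMod n)) - (r : ZMod n) = (f + ((r' : ℕ) : ZMod n)) - (r : ZMod n) := by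
          rw [hx]
        rw [add_sub_cancel_right] at this
        rw [this]
        rw [Nat.cast_sub hle]
        ring
      have hgd := hdist i j hij e he f hf
      rw [hef] at hgd
      have := cycDist_add_le (n := n) (r := r' - r) (by omega) f
      omega
    · have hef : f = e + (((r - r' : ℕ) : ZMod n)) := by
        have : (f + ((r' : ℕ) : ZMod n)) - ((r' : ℕ) : ZMod n)
            = (e + (r : ZMod n)) - ((r' : ℕ) : ZMod n) := by rw [hx]
        rw [add_sub_cancel_right] at this
        rw [this]
        rw [Nat.cast_sub hle]
        ring
      have hgd := hdist j i hij.symm f hf e he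
      rw [hef] at hgd
      have := cycDist_add_le (n := n) (r := r - r') (by omega) e
      omega
  -- counting
  have hsum : (Finset.univ.biUnion T).card = ∑ i, (T i).card :=
    Finset.card_biUnion hdisjT
  have hle_n : ∑ i, (T i).card ≤ n := by
    rw [← hsum]
    calc (Finset.univ.biUnion T).card ≤ (Finset.univ : Finset (ZMod n)).card :=
          Finset.card_le_card (Finset.subset_univ _)
      _ = n := by rw [Finset.card_univ, ZMod.card]
  have hsum_eq : ∑ i, (T i).card = (∑ i, s i) + m * (g - 1) := by
    calc ∑ i, (T i).card = ∑ i, (s i + (g - 1)) := by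
          apply Finset.sum_congr rfl
          intro i _
          rw [hcardT i]
          have := hs1 i
          omega
      _ = (∑ i, s i) + m * (g - 1) := by
          rw [Finset.sum_add_distrib, Finset.sum_const, Finset.card_univ,
            Fintype.card_fin, smul_eq_mul]
  have hsum_s : ∑ i, s i = m + d := by
    have : ∀ i : Fin m, s i = 1 + (if (B i).card = 2 then 1 else 0) := by
      intro i
      have h1 := hs1 i
      have h2 := hs2 i
      have h3 := hcardB i
      by_cases h : (B i).card = 2 <;> simp [h] <;> omega
    calc ∑ i, s i = ∑ i : Fin m, (1 + if (B i).card = 2 then 1 else 0) :=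
          Finset.sum_congr rfl (fun i _ => this i)
      _ = m + d := by
          rw [Finset.sum_add_distrib, Finset.sum_const, Finset.card_univ, Fintype.card_fin,
            smul_eq_mul, Nat.mul_one, hd, Finset.card_filter]
  have hmg : m * (g - 1) + m = m * g := by
    have : m * (g - 1) + m * 1 = m * g := by
      rw [← Nat.mul_add]
      congr 1
      omega
    omega
  have hgm : g * m = m * g := Nat.mul_comm _ _
  omega


/-- A cell configuration for `Φ_{m,n,g}`: a family of `m` pairwise disjoint
nonempty subsets of `ZMod n`, each of the form `{a}` or `{a, a+1}`, any two
distinct blocks being at minimum cyclic distance at least `g`. -/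
def IsCellConfig (m n g : ℕ) (B : Fin m → Finset (ZMod n)) : Prop :=
  (∀ i, (B i).Nonempty) ∧
  (∀ i j, i ≠ j → Disjoint (B i) (B j)) ∧
  (∀ i, (∃ a : ZMod n, B i = {a}) ∨ (∃ a : ZMod n, B i = {a, a + 1})) ∧
  (∀ i j, i ≠ j → ∀ a ∈ B i, ∀ b ∈ B j, g ≤ cycDist a b)

/-- **The dimension of `Φ_{m,n,g}` is `min(m, n − gm)`.** For `m ≥ 2`, `g ≥ 1`
and `n ≥ g·m`, the maximum number of two-element blocks in a cell
configuration equals `min(m, n − g·m)`. -/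
theorem cohomology_of_colorings_of_cycles_stmt19
    (m n g : ℕ) (hm : 2 ≤ m) (hg : 1 ≤ g) (hn : g * m ≤ n) :
    IsGreatest {d : ℕ | ∃ B : Fin m → Finset (ZMod n), IsCellConfig m n g B ∧
        (Finset.univ.filter (fun i => (B i).card = 2)).card = d}
      (min m (n - g * m)) := by
  constructor
  · obtain ⟨B, hcfg, hcount⟩ := construction m n g hm hg hn
    exact ⟨B, hcfg, hcount⟩
  · rintro d ⟨B, ⟨hne, hdisj, hstruct, hdist⟩, rfl⟩
    exact upper m n g hm hg hn B hne hstruct hdist
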